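/- Let T > 0, let p ∈ ℕ (the hidden dimension) and m ∈ ℕ with m ≥ 1 (the control dimension). Let h : ℝ^p × ℝ^m → ℝ^p be Lipschitz continuous and ξ : ℝ^m → ℝ^p be continuous. Then there exist a Lipschitz continuous f : ℝ^{p+m} → ℝ^{(p+m) × m} and a continuous ζ : ℝ^m → ℝ^{p+m} such that: for every continuously differentiable x : [0,T] → ℝ^{m−1}, writing x̂(t) = (t, x(t)) ∈ ℝ^m, and for every differentiable z : [0,T] → ℝ^{p+m} with z(0) = ζ(x̂(0)) and z'(t) = f(z(t)) · x̂'(t) for all t, and every differentiable y : [0,T] → ℝ^p with y(0) = ξ(x̂(0)) and y'(t) = h(y(t), x̂(t)) for all t, the first p coordinates of z(t) equal y(t) for all t ∈ [0,T]. (Every ODE of the form y' = h(y(t), x(t)) is represented exactly by a controlled differential equation of the form z' = f(z(t)) dx̂(t).) -/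

import Mathlib

/-!
The CDE state is `w = (y, a)`, hidden state and control, and the vector field is
`f (y, a) v = (τ v • h y a, v)` where `τ` reads off the time channel of a control increment.
Along `x̂` the control part of a CDE solution has derivative `x̂'`, so it equals `x̂`; since
`τ x̂' = 1`, the hidden part then solves `y' = h (y, x̂)` with the initial value of `y`, and
uniqueness of solutions of Lipschitz ODEs identifies the two.
-/

open Set

section

variable {R M : Type*} [Semiring R] [AddCommMonoid M] [Module R M] [TopologicalSpace M]

def Fin.appendL (p n : ℕ) : ((Fin p → M) × (Fin n → M)) ≃L[R] (Fin (p + n) → M) :=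
  { Fin.appendHomeomorph p n with
    map_add' := fun _ _ => by
      ext k
      refine Fin.addCases (fun i => ?_) (fun j => ?_) k <;> simp [Fin.appendHomeomorph]
    map_smul' := fun _ _ => by
      ext k
      refine Fin.addCases (fun i => ?_) (fun j => ?_) k <;> simp [Fin.appendHomeomorph] }

@[simp] lemma Fin.appendL_symm_apply (p n : ℕ) (w : Fin (p + n) → M) :
    (Fin.appendL (R := R) p n).symm w =
      (fun i => w (Fin.castAdd n i), fun j => w (Fin.natAdd p j)) := rfl

end

theorem ODE_solution_unique_of_hasDerivWithinAt_Icc {G : Type*} [NormedAddCommGroup G]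
    [NormedSpace ℝ G] {v : ℝ → G → G} {K : NNReal} (hv : ∀ t, LipschitzWith K (v t))
    {f g : ℝ → G} {a b : ℝ}
    (hf : ∀ t ∈ Icc a b, HasDerivWithinAt f (v t (f t)) (Icc a b) t)
    (hg : ∀ t ∈ Icc a b, HasDerivWithinAt g (v t (g t)) (Icc a b) t) (ha : f a = g a) :
    EqOn f g (Icc a b) :=
  ODE_solution_unique hv (fun t ht => (hf t ht).continuousWithinAt)
    (fun t ht => (hf t (Ico_subset_Icc_self ht)).mono_of_mem_nhdsWithin
      (Icc_mem_nhdsGE_of_mem ht))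
    (fun t ht => (hg t ht).continuousWithinAt)
    (fun t ht => (hg t (Ico_subset_Icc_self ht)).mono_of_mem_nhdsWithin
      (Icc_mem_nhdsGE_of_mem ht))
    ha

namespace CDE

variable {E F : Type*} [NormedAddCommGroup E] [NormedSpace ℝ E]
  [NormedAddCommGroup F] [NormedSpace ℝ F]

noncomputable def vectorField (τ : StrongDual ℝ F) (h : E → F → E) (w : E × F) :
    F →L[ℝ] E × F :=
  (τ.smulRight (h w.1 w.2)).prod (ContinuousLinearMap.id ℝ F)

@[simp] lemma vectorField_apply (τ : StrongDual ℝ F) (h : E → F → E) (w : E × F) (v : F) :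
    vectorField τ h w v = (τ v • h w.1 w.2, v) := rfl

lemma lipschitzWith_vectorField (τ : StrongDual ℝ F) {h : E → F → E} {K : NNReal}
    (hh : LipschitzWith K (Function.uncurry h)) :
    LipschitzWith (‖τ‖₊ * K) (vectorField τ h) := by
  refine LipschitzWith.of_dist_le_mul fun w w' => ?_
  have hdiff : vectorField τ h w - vectorField τ h w' =
      (τ.smulRight (h w.1 w.2 - h w'.1 w'.2)).prod 0 := by
    ext v <;> simp [smul_sub]
  calc dist (vectorField τ h w) (vectorField τ h w')
      = ‖τ‖ * dist (h w.1 w.2) (h w'.1 w'.2) := by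
        rw [dist_eq_norm, hdiff, ContinuousLinearMap.opNorm_prod, Prod.norm_mk, norm_zero,
          max_eq_left (norm_nonneg _), ContinuousLinearMap.norm_smulRight_apply, dist_eq_norm]
    _ ≤ ‖τ‖ * (K * dist w w') := by gcongr; exact hh.dist_le_mul w w'
    _ = ↑(‖τ‖₊ * K) * dist w w' := by push_cast; ring

theorem eqOn_of_hasDerivWithinAt_vectorField {τ : StrongDual ℝ F} {h : E → F → E}
    {K : NNReal} (hh : ∀ a, LipschitzWith K (h · a)) {a b : ℝ} {X X' : ℝ → F}
    (hX : ∀ t ∈ Icc a b, HasDerivWithinAt X (X' t) (Icc a b) t)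
    (hτ : ∀ t ∈ Icc a b, τ (X' t) = 1) {y : ℝ → E}
    (hy : ∀ t ∈ Icc a b, HasDerivWithinAt y (h (y t) (X t)) (Icc a b) t) {z : ℝ → E × F}
    (hz : ∀ t ∈ Icc a b, HasDerivWithinAt z (vectorField τ h (z t) (X' t)) (Icc a b) t)
    (hz₀ : z a = (y a, X a)) :
    EqOn z (fun t => (y t, X t)) (Icc a b) := by
  have hcontrol : EqOn (fun t => (z t).2) X (Icc a b) :=
    ODE_solution_unique_of_hasDerivWithinAt_Icc (v := fun t _ => X' t)
      (fun t => LipschitzWith.const (X' t))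
      (fun t ht => (ContinuousLinearMap.snd ℝ E F).hasFDerivAt.comp_hasDerivWithinAt t (hz t ht))
      hX (congrArg Prod.snd hz₀)
  have hhidden : EqOn (fun t => (z t).1) y (Icc a b) := by
    refine ODE_solution_unique_of_hasDerivWithinAt_Icc (v := fun t e => h e (X t))
      (fun t => hh (X t)) (fun t ht => ?_) hy (congrArg Prod.fst hz₀)
    have hfst := (ContinuousLinearMap.fst ℝ E F).hasFDerivAt.comp_hasDerivWithinAt t (hz t ht)
    simpa only [Function.comp_def, ContinuousLinearMap.coe_fst', vectorField_apply, hτ t ht,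
      one_smul, hcontrol ht] using hfst
  exact fun t ht => Prod.ext (hhidden ht) (hcontrol ht)

end CDE

theorem ode_represented_by_cde_general
    (T : ℝ) (p m : ℕ)
    (h : (Fin p → ℝ) → (Fin (m + 1) → ℝ) → (Fin p → ℝ)) (Ch : NNReal)
    (hh : LipschitzWith Ch (Function.uncurry h))
    (ξ : (Fin (m + 1) → ℝ) → (Fin p → ℝ)) (hξ : Continuous ξ) :
    ∃ (f : (Fin (p + (m + 1)) → ℝ) → (Fin (m + 1) → ℝ) →L[ℝ] (Fin (p + (m + 1)) → ℝ))
      (Cf : NNReal) (ζ : (Fin (m + 1) → ℝ) → Fin (p + (m + 1)) → ℝ),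
      LipschitzWith Cf f ∧ Continuous ζ ∧
      ∀ x x' : ℝ → Fin m → ℝ,
        (∀ t ∈ Set.Icc (0:ℝ) T, HasDerivWithinAt x (x' t) (Set.Icc 0 T) t) →
        ContinuousOn x' (Set.Icc (0:ℝ) T) →
        ∀ z : ℝ → Fin (p + (m + 1)) → ℝ,
          z 0 = ζ (Fin.cons (0:ℝ) (x 0)) →
          (∀ t ∈ Set.Icc (0:ℝ) T,
            HasDerivWithinAt z (f (z t) (Fin.cons (1:ℝ) (x' t))) (Set.Icc 0 T) t) →
          ∀ y : ℝ → Fin p → ℝ,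
            y 0 = ξ (Fin.cons (0:ℝ) (x 0)) →
            (∀ t ∈ Set.Icc (0:ℝ) T,
              HasDerivWithinAt y (h (y t) (Fin.cons t (x t))) (Set.Icc 0 T) t) →
            ∀ t ∈ Set.Icc (0:ℝ) T, ∀ i : Fin p, z t (Fin.castAdd (m + 1) i) = y t i := by
  let e := Fin.appendL (R := ℝ) (M := ℝ) p (m + 1)
  let τ : StrongDual ℝ (Fin (m + 1) → ℝ) := ContinuousLinearMap.proj 0
  let postcomp := ContinuousLinearMap.compL ℝ (Fin (m + 1) → ℝ) _ _ e.toContinuousLinearMap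
  refine ⟨postcomp ∘ CDE.vectorField τ h ∘ e.symm, _, fun a => e (ξ a, a),
    (postcomp.lipschitz.comp (CDE.lipschitzWith_vectorField τ hh)).comp e.symm.lipschitz,
    e.continuous.comp (hξ.prodMk continuous_id), ?_⟩
  intro x x' hx _ z hz₀ hz y hy₀ hy t ht i
  have hX : ∀ t ∈ Icc 0 T, HasDerivWithinAt (fun t => (Fin.cons t (x t) : Fin (m + 1) → ℝ))
      (Fin.cons 1 (x' t)) (Icc 0 T) t :=
    fun t ht => (hasDerivWithinAt_id t _).finCons (hx t ht)
  have hZ : ∀ t ∈ Icc 0 T, HasDerivWithinAt (fun t => e.symm (z t))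
      (CDE.vectorField τ h (e.symm (z t)) (Fin.cons 1 (x' t))) (Icc 0 T) t := fun t ht => by
    simpa [postcomp, Function.comp_def] using
      e.symm.toContinuousLinearMap.hasFDerivAt.comp_hasDerivWithinAt t (hz t ht)
  have hZy := CDE.eqOn_of_hasDerivWithinAt_vectorField
    (fun a => hh.comp (LipschitzWith.prodMk_right a)) hX (fun _ _ => rfl) hy hZ
    (by rw [hz₀, e.symm_apply_apply, hy₀])
  exact congrArg (fun w => w.1 i) (hZy ht)

/-- **Every ODE of the form `y' = h(y(t), x̂(t))` is represented exactly by a CDE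
`z' = f(z(t)) dx̂(t)`.** Here the hidden dimension is `p`, the control dimension is `m + 1`
(covering all control dimensions `≥ 1`), time is included as the first channel of the
control `x̂(t) = (t, x(t))`, the CDE vector field `f : ℝ^{p+(m+1)} → ℝ^{(p+(m+1)) × (m+1)}`
is encoded as a map into linear maps, and the first `p` coordinates of the CDE solution `z`
recover the ODE solution `y`. -/
theorem ode_represented_by_cde
    (T : ℝ) (hT : 0 < T) (p m : ℕ)
    (h : (Fin p → ℝ) → (Fin (m + 1) → ℝ) → (Fin p → ℝ)) (Ch : NNReal)
    (hh : LipschitzWith Ch (Function.uncurry h))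
    (ξ : (Fin (m + 1) → ℝ) → (Fin p → ℝ)) (hξ : Continuous ξ) :
    ∃ (f : (Fin (p + (m + 1)) → ℝ) → (Fin (m + 1) → ℝ) →L[ℝ] (Fin (p + (m + 1)) → ℝ))
      (Cf : NNReal) (ζ : (Fin (m + 1) → ℝ) → Fin (p + (m + 1)) → ℝ),
      LipschitzWith Cf f ∧ Continuous ζ ∧
      ∀ x x' : ℝ → Fin m → ℝ,
        (∀ t ∈ Set.Icc (0:ℝ) T, HasDerivWithinAt x (x' t) (Set.Icc 0 T) t) →
        ContinuousOn x' (Set.Icc (0:ℝ) T) →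
        ∀ z : ℝ → Fin (p + (m + 1)) → ℝ,
          z 0 = ζ (Fin.cons (0:ℝ) (x 0)) →
          (∀ t ∈ Set.Icc (0:ℝ) T,
            HasDerivWithinAt z (f (z t) (Fin.cons (1:ℝ) (x' t))) (Set.Icc 0 T) t) →
          ∀ y : ℝ → Fin p → ℝ,
            y 0 = ξ (Fin.cons (0:ℝ) (x 0)) →
            (∀ t ∈ Set.Icc (0:ℝ) T,
              HasDerivWithinAt y (h (y t) (Fin.cons t (x t))) (Set.Icc 0 T) t) →
            ∀ t ∈ Set.Icc (0:ℝ) T, ∀ i : Fin p, z t (Fin.castAdd (m + 1) i) = y t i :=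
  ode_represented_by_cde_general T p m h Ch hh ξ hξ
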